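/- Let l be a positive integer. The group Γ'_{2l,π/2} is torsion-free: if γ ∈ Γ'_{2l,π/2} satisfies γ^m = id for some positive integer m, then γ = id. -/

import Mathlib

noncomputable section

abbrev H3 := ℝ × ℝ × ℝ

/-- polarized Heisenberg multiplication -/
def Hmul (a b : H3) : H3 := (a.1 + b.1, a.2.1 + b.2.1, a.2.2 + b.2.2 + a.1 * b.2.1)

/-- left translation L_γ : h ↦ γ ⋆ h as a bijection of ℍ -/
def Ltrans (γ : H3) : Equiv.Perm H3 where
  toFun x := Hmul γ x
  invFun x := (x.1 - γ.1, x.2.1 - γ.2.1, x.2.2 - γ.2.2 - γ.1 * (x.2.1 - γ.2.1))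
  left_inv := by
    rintro ⟨a, b, c⟩
    simp only [Hmul, Prod.mk.injEq]
    refine ⟨by ring, by ring, by ring⟩
  right_inv := by
    rintro ⟨a, b, c⟩
    simp only [Hmul, Prod.mk.injEq]
    refine ⟨by ring, by ring, by ring⟩

/-- the map ψ(p,q,s) = (−q, p, s + 1/4 − pq) as a bijection of ℍ -/
def psiPerm : Equiv.Perm H3 where
  toFun x := (-x.2.1, x.1, x.2.2 + 1 / 4 - x.1 * x.2.1)
  invFun x := (x.2.1, -x.1, x.2.2 - 1 / 4 - x.1 * x.2.1)
  left_inv := by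
    rintro ⟨a, b, c⟩
    simp only [Prod.mk.injEq]
    refine ⟨trivial, by ring, by ring⟩
  right_inv := by
    rintro ⟨a, b, c⟩
    simp only [Prod.mk.injEq]
    refine ⟨by ring, trivial, by ring⟩

/-- the lattice N'_{2l} = √(2l)ℤ × √(2l)ℤ × ℤ -/
def N2l' (l : ℕ) : Set H3 :=
  {x | ∃ a b c : ℤ,
    x = (Real.sqrt (2 * l) * (a : ℝ), Real.sqrt (2 * l) * (b : ℝ), (c : ℝ))}

/-- the Heisenberg Bieberbach group Γ'_{2l,π/2}, generated by translations by N'_{2l} and ψ -/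
def Gamma2lpihalf' (l : ℕ) : Subgroup (Equiv.Perm H3) :=
  Subgroup.closure ((Ltrans '' N2l' l) ∪ {psiPerm})

def phi3 (x : H3) : H3 := (-x.2.1, x.1, x.2.2 - x.1 * x.2.1)

lemma phi3_hmul (a b : H3) : phi3 (Hmul a b) = Hmul (phi3 a) (phi3 b) := by
  refine Prod.ext ?_ (Prod.ext ?_ ?_) <;> simp only [phi3, Hmul] <;> ring

lemma phi3_iter_hmul (k : ℕ) (a b : H3) :
    phi3^[k] (Hmul a b) = Hmul (phi3^[k] a) (phi3^[k] b) := by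
  induction k with
  | zero => simp
  | succ n ih =>
      rw [Function.iterate_succ_apply', ih, phi3_hmul,
        Function.iterate_succ_apply', Function.iterate_succ_apply']

lemma hmul_assoc (a b c : H3) : Hmul a (Hmul b c) = Hmul (Hmul a b) c := by
  refine Prod.ext ?_ (Prod.ext ?_ ?_) <;> simp only [Hmul] <;> ring

lemma phi3_four (x : H3) : phi3^[4] x = x := by
  obtain ⟨p, q, s⟩ := x
  show phi3 (phi3 (phi3 (phi3 (p, q, s)))) = (p, q, s)
  refine Prod.ext ?_ (Prod.ext ?_ ?_) <;> simp only [phi3] <;> ring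

lemma phi3_iter_four_mul (t : ℕ) (x : H3) : phi3^[4 * t] x = x := by
  induction t with
  | zero => simp
  | succ n ih =>
      have h : 4 * (n + 1) = 4 + 4 * n := by ring
      rw [h, Function.iterate_add_apply, ih, phi3_four]

lemma phi3_iter_mod (k : ℕ) (x : H3) : phi3^[k] x = phi3^[k % 4] x := by
  conv_lhs => rw [← Nat.div_add_mod k 4]
  rw [Function.iterate_add_apply, phi3_iter_four_mul]

lemma phi3_zero : phi3 (0, 0, 0) = ((0 : ℝ), (0 : ℝ), (0 : ℝ)) := by
  refine Prod.ext ?_ (Prod.ext ?_ ?_) <;> simp [phi3]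

lemma hmul_zero_left (y : H3) : Hmul (0, 0, 0) y = y := by
  obtain ⟨p, q, s⟩ := y
  refine Prod.ext ?_ (Prod.ext ?_ ?_) <;> simp [Hmul]

lemma phi3_iter_lattice (l k : ℕ) (a b : ℤ) (t : ℝ) :
    ∃ a' b' j : ℤ, phi3^[k] (Real.sqrt (2*l) * a, Real.sqrt (2*l) * b, t) =
      (Real.sqrt (2*l) * a', Real.sqrt (2*l) * b', t + 2*l*j) := by
  have hs : Real.sqrt (2*l) * Real.sqrt (2*l) = 2*l := Real.mul_self_sqrt (by positivity)
  induction k with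
  | zero => exact ⟨a, b, 0, by norm_num⟩
  | succ n ih =>
      obtain ⟨a', b', j, h⟩ := ih
      refine ⟨-b', a', j - a' * b', ?_⟩
      rw [Function.iterate_succ_apply', h]
      refine Prod.ext ?_ (Prod.ext ?_ ?_) <;> simp only [phi3] <;> push_cast <;>
        first | ring1 | linear_combination (-(a' : ℝ) * (b' : ℝ)) * hs

def Good (l : ℕ) (γ : Equiv.Perm H3) : Prop :=
  ∃ (a b c : ℤ) (k : ℕ), ∀ x : H3,
    γ x = Hmul (Real.sqrt (2*l) * a, Real.sqrt (2*l) * b, (c : ℝ) + k / 4) (phi3^[k] x)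

lemma good_one (l : ℕ) : Good l 1 := by
  refine ⟨0, 0, 0, 0, fun x => ?_⟩
  obtain ⟨p, q, s⟩ := x
  show (p, q, s) = Hmul _ _
  refine Prod.ext ?_ (Prod.ext ?_ ?_) <;> simp [Hmul]

lemma good_mul (l : ℕ) {γ δ : Equiv.Perm H3} (h1 : Good l γ) (h2 : Good l δ) :
    Good l (γ * δ) := by
  have hs : Real.sqrt (2*l) * Real.sqrt (2*l) = 2*l := Real.mul_self_sqrt (by positivity)
  obtain ⟨a, b, c, k, hγ⟩ := h1
  obtain ⟨a', b', c', k', hδ⟩ := h2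
  obtain ⟨a'', b'', j, hlat⟩ := phi3_iter_lattice l k a' b' ((c' : ℝ) + k' / 4)
  refine ⟨a + a'', b + b'', c + c' + 2 * l * j + 2 * l * a * b'', k + k', fun x => ?_⟩
  rw [Equiv.Perm.mul_apply, hδ, hγ, phi3_iter_hmul, hlat, Function.iterate_add_apply]
  refine Prod.ext ?_ (Prod.ext ?_ ?_) <;> simp only [Hmul] <;> push_cast
  · ring
  · ring
  · linear_combination ((a : ℝ) * (b'' : ℝ)) * hs

lemma good_inv (l : ℕ) {γ : Equiv.Perm H3} (h1 : Good l γ) : Good l γ⁻¹ := by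
  have hs : Real.sqrt (2*l) * Real.sqrt (2*l) = 2*l := Real.mul_self_sqrt (by positivity)
  obtain ⟨a, b, c, k, hγ⟩ := h1
  obtain ⟨a'', b'', j, hlat⟩ :=
    phi3_iter_lattice l (3 * k) (-a) (-b) (-(c : ℝ) - k / 4 + 2 * l * a * b)
  refine ⟨a'', b'', -c + 2 * l * a * b + 2 * l * j - k, 3 * k, fun x => ?_⟩
  have hz : Hmul (Real.sqrt (2*l) * ((-a : ℤ) : ℝ), Real.sqrt (2*l) * ((-b : ℤ) : ℝ),
      -(c : ℝ) - k / 4 + 2 * l * a * b)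
      (Real.sqrt (2*l) * a, Real.sqrt (2*l) * b, (c : ℝ) + k / 4) = ((0:ℝ), (0:ℝ), (0:ℝ)) := by
    refine Prod.ext ?_ (Prod.ext ?_ ?_) <;> simp only [Hmul] <;> push_cast
    · ring
    · ring
    · linear_combination (-(a : ℝ) * (b : ℝ)) * hs
  have key : ∀ y : H3,
      Hmul (Real.sqrt (2*l) * a'', Real.sqrt (2*l) * b'',
        (-(c : ℝ) - k / 4 + 2 * l * a * b) + 2*l*j) (phi3^[3 * k] (γ y)) = y := by
    intro y
    rw [hγ y, phi3_iter_hmul]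
    have h44 : phi3^[3 * k] (phi3^[k] y) = y := by
      rw [← Function.iterate_add_apply]
      have h4 : 3 * k + k = 4 * k := by ring
      rw [h4, phi3_iter_four_mul]
    rw [h44, ← hlat, hmul_assoc, ← phi3_iter_hmul, hz,
      Function.iterate_fixed phi3_zero, hmul_zero_left]
  have hk := key (γ⁻¹ x)
  rw [show γ (γ⁻¹ x) = x from γ.apply_symm_apply x] at hk
  rw [← hk]
  refine Prod.ext rfl (Prod.ext rfl ?_)
  push_cast
  ring

lemma good_gen (l : ℕ) : ∀ g ∈ (Ltrans '' N2l' l) ∪ {psiPerm}, Good l g := by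
  rintro g (⟨n, ⟨a, b, c, rfl⟩, rfl⟩ | rfl)
  · refine ⟨a, b, c, 0, fun x => ?_⟩
    show Hmul _ x = _
    rw [Function.iterate_zero_apply]
    refine Prod.ext rfl (Prod.ext rfl ?_)
    simp only [Hmul]
    push_cast; ring
  · refine ⟨0, 0, 0, 1, fun x => ?_⟩
    show ((-x.2.1, x.1, x.2.2 + 1 / 4 - x.1 * x.2.1) : H3) = _
    rw [Function.iterate_one]
    refine Prod.ext ?_ (Prod.ext ?_ ?_) <;> simp only [Hmul, phi3] <;> push_cast <;> ring

lemma pow_four_eq (γ : Equiv.Perm H3) (x : H3) : (γ ^ 4) x = γ (γ (γ (γ x))) := by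
  have e4 : γ ^ 4 = γ * γ * γ * γ := by
    rw [show (4:ℕ) = 3+1 from rfl, pow_succ, show (3:ℕ) = 2+1 from rfl, pow_succ,
      show (2:ℕ) = 1+1 from rfl, pow_succ, pow_one]
  rw [e4]
  simp [Equiv.Perm.mul_apply]

lemma trans_eq_one (γ : Equiv.Perm H3) (n : H3) (hγ : ∀ x, γ x = Hmul n x)
    (m : ℕ) (hm : 0 < m) (hp : γ ^ m = 1) : γ = 1 := by
  have claim : ∀ j : ℕ, (γ ^ j) ((0:ℝ), (0:ℝ), (0:ℝ)) =
      ((j : ℝ) * n.1, (j : ℝ) * n.2.1,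
        (j : ℝ) * n.2.2 + ((j : ℝ) * ((j : ℝ) - 1)) / 2 * n.1 * n.2.1) := by
    intro j
    induction j with
    | zero => simp
    | succ i ih =>
        rw [pow_succ', Equiv.Perm.mul_apply, ih, hγ]
        refine Prod.ext ?_ (Prod.ext ?_ ?_) <;> simp only [Hmul] <;> push_cast <;> ring
  have h0 := claim m
  rw [hp] at h0
  simp only [Equiv.Perm.one_apply] at h0
  have hmne : (m : ℝ) ≠ 0 := Nat.cast_ne_zero.mpr hm.ne'
  have h1 : (0 : ℝ) = (m : ℝ) * n.1 := congrArg Prod.fst h0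
  have h2 : (0 : ℝ) = (m : ℝ) * n.2.1 := congrArg (fun z : H3 => z.2.1) h0
  have h3 := congrArg (fun z : H3 => z.2.2) h0
  have hn1 : n.1 = 0 := by
    rcases mul_eq_zero.mp h1.symm with h | h
    · exact absurd h hmne
    · exact h
  have hn2 : n.2.1 = 0 := by
    rcases mul_eq_zero.mp h2.symm with h | h
    · exact absurd h hmne
    · exact h
  have hn3 : n.2.2 = 0 := by
    simp only [hn1, hn2, mul_zero, zero_mul, add_zero] at h3
    rcases mul_eq_zero.mp h3.symm with h | h
    · exact absurd h hmne
    · exact h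
  have hn : n = ((0:ℝ), (0:ℝ), (0:ℝ)) := Prod.ext hn1 (Prod.ext hn2 hn3)
  refine Equiv.ext fun x => ?_
  rw [hγ x, hn, hmul_zero_left]
  rfl

lemma rot_no_torsion (γ : Equiv.Perm H3) (ρ : ℝ) (hρ : ρ ≠ 0)
    (h4 : ∀ x : H3, (γ ^ 4) x = (x.1, x.2.1, x.2.2 + ρ))
    (m : ℕ) (hm : 0 < m) (hp : γ ^ m = 1) : False := by
  have claim : ∀ j : ℕ, ((γ ^ 4) ^ j) ((0:ℝ), (0:ℝ), (0:ℝ)) = (0, 0, (j : ℝ) * ρ) := by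
    intro j
    induction j with
    | zero => simp
    | succ i ih =>
        rw [pow_succ', Equiv.Perm.mul_apply, ih, h4]
        refine Prod.ext rfl (Prod.ext rfl ?_)
        show (i : ℝ) * ρ + ρ = ((i + 1 : ℕ) : ℝ) * ρ
        push_cast; ring
  have h1 : (γ ^ 4) ^ m = 1 := by
    rw [← pow_mul, mul_comm, pow_mul, hp, one_pow]
  have h0 := claim m
  rw [h1] at h0
  simp only [Equiv.Perm.one_apply] at h0
  have h3 : (0 : ℝ) = (m : ℝ) * ρ := congrArg (fun z : H3 => z.2.2) h0
  have hmne : (m : ℝ) ≠ 0 := Nat.cast_ne_zero.mpr hm.ne'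
  rcases mul_eq_zero.mp h3.symm with h | h
  · exact hmne h
  · exact hρ h

/-- the group Γ'_{2l,π/2} is torsion-free. -/
theorem Gamma2lpihalf'_torsionFree (l : ℕ) (hl : 0 < l) :
    ∀ γ ∈ Gamma2lpihalf' l, ∀ m : ℕ, 0 < m → γ ^ m = 1 → γ = 1 := by
  intro γ hγmem m hm hpow
  have hGood : Good l γ :=
    Subgroup.closure_induction (fun g hg => good_gen l g hg) (good_one l)
      (fun x y _ _ hx hy => good_mul l hx hy) (fun x _ hx => good_inv l hx) hγmem
  obtain ⟨a, b, c, k, hγ⟩ := hGood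
  have hs : Real.sqrt (2*l) * Real.sqrt (2*l) = 2*l := Real.mul_self_sqrt (by positivity)
  set r := k % 4 with hrdef
  set t : ℕ := k / 4 with htdef
  have hγ' : ∀ x, γ x = Hmul (Real.sqrt (2*l) * a, Real.sqrt (2*l) * b, (c : ℝ) + k / 4)
      (phi3^[r] x) := fun x => by rw [hγ x, phi3_iter_mod]
  have hkr : (k : ℝ) = 4 * (t : ℝ) + (r : ℝ) := by
    exact_mod_cast (Nat.div_add_mod k 4).symm
  have hrlt : r < 4 := Nat.mod_lt _ (by norm_num)
  have hr : r = 0 ∨ r = 1 ∨ r = 2 ∨ r = 3 := by omega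
  rcases hr with hr | hr | hr | hr <;> rw [hr] at hγ' hkr
  · exact trans_eq_one γ _ (fun x => by simpa using hγ' x) m hm hpow
  · exfalso
    have hNN : (4 * ((c : ℤ) + t) + 1 + 2 * ((l : ℤ) * (a - b) ^ 2)) ≠ 0 := by
      intro h
      set X := (l : ℤ) * (a - b) ^ 2 with hX
      omega
    refine rot_no_torsion γ ((4 * ((c : ℤ) + t) + 1 + 2 * ((l : ℤ) * (a - b) ^ 2) : ℤ) : ℝ)
      (Int.cast_ne_zero.mpr hNN) (fun x => ?_) m hm hpow
    rw [pow_four_eq, hγ', hγ', hγ', hγ']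
    simp only [Function.iterate_one]
    refine Prod.ext ?_ (Prod.ext ?_ ?_) <;> simp only [Hmul, phi3] <;> push_cast <;>
      first
        | ring1
        | linear_combination (((a:ℝ) - b)^2) * hs + hkr
  · exfalso
    have hNN : (4 * ((c : ℤ) + t) + 2 - 4 * ((l : ℤ) * a * b)) ≠ 0 := by
      intro h
      set X := (l : ℤ) * a * b with hX
      omega
    have h2it : ∀ y : H3, phi3^[2] y = phi3 (phi3 y) := fun y => rfl
    refine rot_no_torsion γ ((4 * ((c : ℤ) + t) + 2 - 4 * ((l : ℤ) * a * b) : ℤ) : ℝ)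
      (Int.cast_ne_zero.mpr hNN) (fun x => ?_) m hm hpow
    rw [pow_four_eq, hγ', hγ', hγ', hγ']
    simp only [h2it]
    refine Prod.ext ?_ (Prod.ext ?_ ?_) <;> simp only [Hmul, phi3] <;> push_cast <;>
      first
        | ring1
        | linear_combination (-2*(a:ℝ)*b) * hs + hkr
  · exfalso
    have hNN : (4 * ((c : ℤ) + t) + 3 - 2 * ((l : ℤ) * (a + b) ^ 2)) ≠ 0 := by
      intro h
      set X := (l : ℤ) * (a + b) ^ 2 with hX
      omega
    have h3it : ∀ y : H3, phi3^[3] y = phi3 (phi3 (phi3 y)) := fun y => rfl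
    refine rot_no_torsion γ ((4 * ((c : ℤ) + t) + 3 - 2 * ((l : ℤ) * (a + b) ^ 2) : ℤ) : ℝ)
      (Int.cast_ne_zero.mpr hNN) (fun x => ?_) m hm hpow
    rw [pow_four_eq, hγ', hγ', hγ', hγ']
    simp only [h3it]
    refine Prod.ext ?_ (Prod.ext ?_ ?_) <;> simp only [Hmul, phi3] <;> push_cast <;>
      first
        | ring1
        | linear_combination (-((a:ℝ) + b)^2) * hs + hkr

end
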